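/- arXiv:2106.01762 — 2 statements merged into one kernel-verified Lean document; each statement's English description precedes it below -/
import Mathlib

section
/- Let $Y_{1,n},\ldots,Y_{n,n}$ be independent random variables with $Y_{i,n}\sim Ber(p_{i,n})$, let $Z_n=\sum_{i=1}^n Y_{i,n}$, and set $\lambda=\sum_{i=1}^n p_{i,n}>0$. Then $d_{TV}(Z_n,\mathcal{P}_\lambda) \le \frac{\sum_{i=1}^n p_{i,n}^2}{\max(1,\lambda)}$. -/
/-!
Stein–Chen method. For `A ⊆ ℕ` let `g_A` solve the Stein equation
`r g(k+1) - k g(k) = 1_A(k) - Po(r)(A)`. The increment `g_A(k+1) - g_A(k)` is a combination of the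
masses of `A` below, at and above `k`; by the size-bias identity `𝔼[N f(N)] = r 𝔼[f(N+1)]` for
`N ~ Po(r)` only the mass at `k` has a positive coefficient, which bounds the increment by
`min 1 r⁻¹`, and `g_{Aᶜ} = -g_A` gives the same lower bound. Evaluating the Stein equation at
`Z = ∑ Yᵢ` and splitting off one summand at a time, independence of `Yᵢ` and `Wᵢ = Z - Yᵢ` gives
`𝔼[λ g(Z+1) - Z g(Z)] = ∑ pᵢ² 𝔼[g(Wᵢ+2) - g(Wᵢ+1)]`, whence
`|P(Z ∈ A) - Po(λ)(A)| ≤ min 1 λ⁻¹ ∑ pᵢ²`.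
-/

open MeasureTheory Filter Real

/-- Total variation distance between two measures on ℕ. -/
noncomputable def dTV (P Q : Measure ℕ) : ℝ :=
  ⨆ A : Set ℕ, |(P A).toReal - (Q A).toReal|

/-- The Poisson distribution with parameter `lam` as a measure on ℕ. -/
noncomputable def poissonMeasure (lam : ℝ) : Measure ℕ :=
  Measure.sum (fun k : ℕ =>
    ENNReal.ofReal (Real.exp (-lam) * lam ^ k / (Nat.factorial k)) • Measure.dirac k)

/-- `Y` has the Bernoulli distribution with parameter `p` (as a ℕ-valued rv). -/
def HasLawBernoulli {Ω : Type*} [MeasurableSpace Ω] (μ : Measure Ω) (Y : Ω → ℕ) (p : ℝ) : Prop :=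
  ∀ k : ℕ, μ {ω | Y ω = k} =
    if k = 0 then ENNReal.ofReal (1 - p) else if k = 1 then ENNReal.ofReal p else 0

open Set
open scoped NNReal ENNReal

namespace ProbabilityTheory

lemma measureReal_inter_Iio_succ (μ : Measure ℕ) [IsFiniteMeasure μ] (s : Set ℕ) (k : ℕ) :
    μ.real (s ∩ Iio (k + 1)) = μ.real (s ∩ Iio k) + μ.real (s ∩ {k}) := by
  rw [← measureReal_union (disjoint_left.2 fun j hj hj' => hj.2.ne hj'.2) (by measurability)]
  congr 1
  ext j
  simp only [mem_inter_iff, mem_union, mem_Iio, mem_singleton_iff, Nat.lt_succ_iff_lt_or_eq]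
  tauto

lemma measureReal_eq_inter_Iio_add_inter_singleton_add_inter_Ioi (μ : Measure ℕ)
    [IsFiniteMeasure μ] (s : Set ℕ) (k : ℕ) :
    μ.real s = μ.real (s ∩ Iio k) + μ.real (s ∩ {k}) + μ.real (s ∩ Ioi k) := by
  rw [← measureReal_inter_Iio_succ, ← measureReal_inter_add_sdiff (s := s) measurableSet_Iio]
  congr 2
  ext j
  simp only [mem_inter_iff, Set.mem_sdiff, mem_Iio, mem_Ioi, not_lt, Nat.succ_le_iff]

lemma measureReal_Ici_eq_singleton_add_Ioi (μ : Measure ℕ) [IsFiniteMeasure μ] (k : ℕ) :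
    μ.real (Ici k) = μ.real {k} + μ.real (Ioi k) := by
  rw [← Ioi_insert, insert_eq, measureReal_union (by simp) measurableSet_Ioi]

lemma measureReal_Iic_eq_Iio_add_singleton (μ : Measure ℕ) [IsFiniteMeasure μ] (k : ℕ) :
    μ.real (Iic k) = μ.real (Iio k) + μ.real {k} := by
  rw [← Iio_insert, insert_eq, measureReal_union (by simp) measurableSet_Iio, add_comm]

lemma poissonMeasure_singleton_succ (r : ℝ≥0) (k : ℕ) :
    (k + 1) * Po(r) {k + 1} = r * Po(r) {k} := by
  rw [poissonMeasure_singleton, poissonMeasure_singleton, ← ENNReal.ofReal_coe_nnreal,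
    ← ENNReal.ofReal_natCast, ← ENNReal.ofReal_one,
    ← ENNReal.ofReal_add (by positivity) zero_le_one, ← ENNReal.ofReal_mul (by positivity),
    ← ENNReal.ofReal_mul (by positivity)]
  congr 1
  rw [Nat.factorial_succ, pow_succ]
  push_cast
  field_simp

lemma poissonMeasure_real_singleton_succ (r : ℝ≥0) (k : ℕ) :
    (k + 1) * Po(r).real {k + 1} = r * Po(r).real {k} := by
  simpa [measureReal_def, ENNReal.toReal_mul, ENNReal.toReal_add] using
    congrArg ENNReal.toReal (poissonMeasure_singleton_succ r k)

lemma lintegral_natCast_mul_poissonMeasure (r : ℝ≥0) (f : ℕ → ℝ≥0∞) :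
    ∫⁻ k, k * f k ∂Po(r) = r * ∫⁻ k, f (k + 1) ∂Po(r) := by
  rw [lintegral_countable', lintegral_countable', tsum_eq_zero_add' ENNReal.summable,
    ← ENNReal.tsum_mul_left]
  simp only [Nat.cast_zero, zero_mul, zero_add, Nat.cast_add, Nat.cast_one]
  congr 1 with k
  rw [mul_right_comm, poissonMeasure_singleton_succ]
  ring

lemma natCast_succ_mul_poissonMeasure_real_Ioi_le (r : ℝ≥0) (k : ℕ) :
    (k + 1) * Po(r).real (Ioi k) ≤ r * Po(r).real (Ici k) := by
  suffices (k + 1) * Po(r) (Ioi k) ≤ r * Po(r) (Ici k) by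
    simpa [measureReal_def, ENNReal.toReal_mul, ENNReal.toReal_add] using
      ENNReal.toReal_mono (by finiteness) this
  calc (k + 1) * Po(r) (Ioi k) = ∫⁻ j, (k + 1) * (Ioi k).indicator 1 j ∂Po(r) := by
        rw [lintegral_const_mul _ (by fun_prop), lintegral_indicator_one measurableSet_Ioi]
    _ ≤ ∫⁻ j, j * (Ioi k).indicator 1 j ∂Po(r) := by
        refine lintegral_mono fun j => ?_
        by_cases hj : k < j
        · simpa [hj] using (by exact_mod_cast hj : (k : ℝ≥0∞) + 1 ≤ j)
        · simp [hj]
    _ = r * Po(r) (Ici k) := by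
        rw [lintegral_natCast_mul_poissonMeasure, ← lintegral_indicator_one measurableSet_Ici]
        congr 2 with j
        simp [indicator]

lemma mul_poissonMeasure_real_Iio_le (r : ℝ≥0) (k : ℕ) :
    r * Po(r).real (Iio k) ≤ k * Po(r).real (Iic k) := by
  suffices r * Po(r) (Iio k) ≤ k * Po(r) (Iic k) by
    simpa [measureReal_def, ENNReal.toReal_mul] using ENNReal.toReal_mono (by finiteness) this
  calc r * Po(r) (Iio k) = ∫⁻ j, j * (Iic k).indicator 1 j ∂Po(r) := by
        rw [lintegral_natCast_mul_poissonMeasure, ← lintegral_indicator_one measurableSet_Iio]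
        congr 2 with j
    _ ≤ ∫⁻ j, k * (Iic k).indicator 1 j ∂Po(r) := by
        refine lintegral_mono fun j => ?_
        by_cases hj : j ≤ k <;> simp [hj]
    _ = k * Po(r) (Iic k) := by
        rw [lintegral_const_mul _ (by fun_prop), lintegral_indicator_one measurableSet_Iic]

def poissonSteinOperator (lam : ℝ) (g : ℕ → ℝ) (k : ℕ) : ℝ :=
  lam * g (k + 1) - k * g k

/-- At `k = 0` the denominator vanishes and `x / 0 = 0` gives the usual normalization `g 0 = 0`. -/
noncomputable def poissonSteinSolution (r : ℝ≥0) (A : Set ℕ) (k : ℕ) : ℝ :=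
  (Po(r).real (A ∩ Iio k) - Po(r).real A * Po(r).real (Iio k)) / (k * Po(r).real {k})

variable {r : ℝ≥0}

lemma natCast_mul_poissonSteinSolution (hr : 0 < r) (A : Set ℕ) (k : ℕ) :
    k * Po(r).real {k} * poissonSteinSolution r A k
      = Po(r).real (A ∩ Iio k) - Po(r).real A * Po(r).real (Iio k) := by
  rcases Nat.eq_zero_or_pos k with rfl | hk
  · simp
  · have := poissonMeasure_real_singleton_pos k hr
    exact mul_div_cancel₀ _ (by positivity)

theorem poissonSteinOperator_poissonSteinSolution (hr : 0 < r) (A : Set ℕ) (k : ℕ) :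
    poissonSteinOperator r (poissonSteinSolution r A) k = A.indicator 1 k - Po(r).real A := by
  have hAk : Po(r).real (A ∩ {k}) = A.indicator 1 k * Po(r).real {k} := by
    by_cases hk : k ∈ A <;> simp [hk]
  refine mul_left_cancel₀ (poissonMeasure_real_singleton_pos k hr).ne' ?_
  calc Po(r).real {k} * poissonSteinOperator r (poissonSteinSolution r A) k
      = (k + 1 : ℕ) * Po(r).real {k + 1} * poissonSteinSolution r A (k + 1)
        - k * Po(r).real {k} * poissonSteinSolution r A k := by
        push_cast
        rw [poissonSteinOperator, poissonMeasure_real_singleton_succ]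
        ring
    _ = Po(r).real {k} * (A.indicator 1 k - Po(r).real A) := by
        rw [natCast_mul_poissonSteinSolution hr, natCast_mul_poissonSteinSolution hr,
          measureReal_inter_Iio_succ, ← univ_inter (Iio (k + 1)), measureReal_inter_Iio_succ,
          univ_inter, univ_inter, hAk]
        ring

lemma poissonSteinSolution_compl (A : Set ℕ) :
    poissonSteinSolution r Aᶜ = -poissonSteinSolution r A := by
  ext k
  have hIio := measureReal_inter_add_sdiff (μ := Po(r)) (s := Iio k) (t := A) .of_discrete
  rw [sdiff_eq, inter_comm, inter_comm (Iio k)] at hIio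
  simp only [poissonSteinSolution, Pi.neg_apply, probReal_compl_eq_one_sub .of_discrete,
    ← neg_div]
  congr 1
  linear_combination hIio

lemma poissonSteinSolution_succ_sub_eq (hr : 0 < r) (A : Set ℕ) {k : ℕ} (hk : 0 < k) :
    Po(r).real {k} * (poissonSteinSolution r A (k + 1) - poissonSteinSolution r A k)
      = Po(r).real (A ∩ Iio k) * (Po(r).real (Ioi k) / r - Po(r).real (Ici k) / k)
        + Po(r).real (A ∩ {k}) * (Po(r).real (Ioi k) / r + Po(r).real (Iio k) / k)
        + Po(r).real (A ∩ Ioi k) * (Po(r).real (Iio k) / k - Po(r).real (Iic k) / r) := by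
  have hP := poissonMeasure_real_singleton_pos k hr
  have hA := measureReal_eq_inter_Iio_add_inter_singleton_add_inter_Ioi Po(r) A k
  have hU := measureReal_eq_inter_Iio_add_inter_singleton_add_inter_Ioi Po(r) univ k
  simp only [univ_inter, probReal_univ] at hU
  have hUk := measureReal_inter_Iio_succ Po(r) univ k
  simp only [univ_inter] at hUk
  simp only [poissonSteinSolution]
  rw [measureReal_Ici_eq_singleton_add_Ioi, measureReal_Iic_eq_Iio_add_singleton,
    measureReal_inter_Iio_succ, hUk, hA]
  push_cast
  rw [poissonMeasure_real_singleton_succ]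
  have hr' : (0 : ℝ) < r := hr
  field_simp
  linear_combination
    (k * (Po(r).real (A ∩ Iio k) + Po(r).real (A ∩ {k})) - r * Po(r).real (A ∩ Iio k)) * hU

lemma poissonSteinSolution_succ_sub_le (hr : 0 < r) (A : Set ℕ) {k : ℕ} (hk : 0 < k) :
    poissonSteinSolution r A (k + 1) - poissonSteinSolution r A k
      ≤ Po(r).real (Ioi k) / r + Po(r).real (Iio k) / k := by
  have hr' : (0 : ℝ) < r := hr
  have hk' : (0 : ℝ) < k := by exact_mod_cast hk
  have hIoi : Po(r).real (Ioi k) / r ≤ Po(r).real (Ici k) / k := by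
    rw [div_le_div_iff₀ hr' hk']
    linarith [natCast_succ_mul_poissonMeasure_real_Ioi_le r k,
      measureReal_nonneg (μ := Po(r)) (s := Ioi k)]
  have hIio : Po(r).real (Iio k) / k ≤ Po(r).real (Iic k) / r := by
    rw [div_le_div_iff₀ hk' hr']
    linarith [mul_poissonMeasure_real_Iio_le r k]
  have hAk : Po(r).real (A ∩ {k}) ≤ Po(r).real {k} := measureReal_mono inter_subset_right
  refine le_of_mul_le_mul_left ?_ (poissonMeasure_real_singleton_pos k hr)
  rw [poissonSteinSolution_succ_sub_eq hr A hk]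
  linarith [mul_nonneg (measureReal_nonneg (μ := Po(r)) (s := A ∩ Iio k)) (sub_nonneg.2 hIoi),
    mul_nonneg (measureReal_nonneg (μ := Po(r)) (s := A ∩ Ioi k)) (sub_nonneg.2 hIio),
    mul_le_mul_of_nonneg_right hAk
      (by positivity : 0 ≤ Po(r).real (Ioi k) / r + Po(r).real (Iio k) / k)]

lemma poissonMeasure_real_Ioi_div_add_Iio_div_le (hr : 0 < r) {k : ℕ} (hk : 0 < k) :
    Po(r).real (Ioi k) / r + Po(r).real (Iio k) / k ≤ (max 1 (r : ℝ))⁻¹ := by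
  have hr' : (0 : ℝ) < r := hr
  have hk' : (1 : ℝ) ≤ k := by exact_mod_cast hk
  have hU := measureReal_eq_inter_Iio_add_inter_singleton_add_inter_Ioi Po(r) univ k
  simp only [univ_inter, probReal_univ] at hU
  have hIoi := natCast_succ_mul_poissonMeasure_real_Ioi_le r k
  have hIio := mul_poissonMeasure_real_Iio_le r k
  rw [measureReal_Ici_eq_singleton_add_Ioi] at hIoi
  rw [measureReal_Iic_eq_Iio_add_singleton] at hIio
  have hR := measureReal_nonneg (μ := Po(r)) (s := Ioi k)
  have hL := measureReal_nonneg (μ := Po(r)) (s := Iio k)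
  rcases le_total 1 (r : ℝ) with h | h
  · rw [max_eq_right h, ← one_div, hU, add_div _ _ (r : ℝ), add_div _ _ (r : ℝ)]
    have : Po(r).real (Iio k) / k ≤ Po(r).real (Iio k) / r + Po(r).real {k} / r := by
      rw [← add_div, div_le_div_iff₀ (by positivity) hr']
      linarith
    linarith
  · rw [max_eq_left h, inv_one]
    have hR1 : Po(r).real (Ioi k) / r ≤ Po(r).real {k} + Po(r).real (Ioi k) := by
      rw [div_le_iff₀ hr']
      linarith [mul_nonneg k.cast_nonneg hR]
    linarith [div_le_self hL hk']

theorem abs_poissonSteinSolution_succ_sub_le (hr : 0 < r) (A : Set ℕ) {k : ℕ} (hk : 0 < k) :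
    |poissonSteinSolution r A (k + 1) - poissonSteinSolution r A k| ≤ (max 1 (r : ℝ))⁻¹ := by
  have hcompl := poissonSteinSolution_succ_sub_le hr Aᶜ hk
  simp only [poissonSteinSolution_compl, Pi.neg_apply] at hcompl
  have hmax := poissonMeasure_real_Ioi_div_add_Iio_div_le hr hk
  exact abs_le.2 ⟨by linarith, (poissonSteinSolution_succ_sub_le hr A hk).trans hmax⟩

lemma measureReal_preimage_sub_poissonMeasure_eq_integral {Ω : Type*} [MeasurableSpace Ω]
    {μ : Measure Ω} [IsProbabilityMeasure μ] (hr : 0 < r) {X : Ω → ℕ} (hX : Measurable X)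
    (A : Set ℕ) :
    μ.real (X ⁻¹' A) - Po(r).real A
      = ∫ ω, poissonSteinOperator r (poissonSteinSolution r A) (X ω) ∂μ := by
  simp_rw [poissonSteinOperator_poissonSteinSolution hr, ← indicator_comp_right X (g := 1)]
  rw [integral_sub ((integrable_const 1).indicator (hX (by measurability))) (integrable_const _),
    integral_const, probReal_univ, one_smul]
  exact congrArg (· - _) (integral_indicator_one (hX (by measurability))).symm

end ProbabilityTheory

open ProbabilityTheory

section

variable {Ω : Type*} [MeasurableSpace Ω] {μ : Measure Ω}

lemma integrable_comp_of_ae_le [IsFiniteMeasure μ] {X : Ω → ℕ} (hX : Measurable X) {M : ℕ}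
    (hM : ∀ᵐ ω ∂μ, X ω ≤ M) (φ : ℕ → ℝ) :
    Integrable (fun ω => φ (X ω)) μ := by
  refine .of_bound (by fun_prop) (∑ k ∈ Finset.range (M + 1), |φ k|) ?_
  filter_upwards [hM] with ω hω
  exact Finset.single_le_sum (f := fun k => |φ k|) (fun k _ => abs_nonneg _)
    (Finset.mem_range.2 (Nat.lt_succ_of_le hω))

namespace HasLawBernoulli

variable {Y : Ω → ℕ} {p : ℝ}

lemma ae_le_one (h : HasLawBernoulli μ Y p) : ∀ᵐ ω ∂μ, Y ω ≤ 1 := by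
  have : ∀ k : ℕ, ∀ᵐ ω ∂μ, Y ω ≠ k + 2 := fun k => by
    rw [ae_iff]; simpa using h (k + 2)
  filter_upwards [ae_all_iff.2 this] with ω hω
  by_contra hlt
  exact hω (Y ω - 2) (by omega)

lemma integral_natCast (h : HasLawBernoulli μ Y p) (hY : Measurable Y) (hp : 0 ≤ p) :
    ∫ ω, (Y ω : ℝ) ∂μ = p := by
  have hind : (fun ω => (Y ω : ℝ)) =ᵐ[μ] {ω | Y ω = 1}.indicator 1 := by
    filter_upwards [h.ae_le_one] with ω hω
    interval_cases hY1 : Y ω <;> simp [hY1]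
  rw [integral_congr_ae hind, integral_indicator_one (s := {ω | Y ω = 1}) (hY (.singleton 1)),
    measureReal_def, h 1]
  simp [hp]

lemma integral_natCast_mul_comp_of_indepFun (h : HasLawBernoulli μ Y p) (hY : Measurable Y)
    (hp : 0 ≤ p) {W : Ω → ℕ} (hW : Measurable W) (hWY : IndepFun W Y μ) (ψ : ℕ → ℝ) :
    ∫ ω, Y ω * ψ (W ω) ∂μ = p * ∫ ω, ψ (W ω) ∂μ := by
  have hprod := (hWY.symm.comp (φ := fun k : ℕ => (k : ℝ)) (ψ := ψ) (by fun_prop)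
    (by fun_prop)).integral_fun_mul_eq_mul_integral (by fun_prop) (by fun_prop)
  simp only [Function.comp_apply] at hprod
  rw [hprod, h.integral_natCast hY hp]

lemma integral_stein_add_eq [IsFiniteMeasure μ] (h : HasLawBernoulli μ Y p) (hY : Measurable Y)
    (hp : 0 ≤ p) {W : Ω → ℕ} (hW : Measurable W) (hWY : IndepFun W Y μ) {M : ℕ}
    (hM : ∀ᵐ ω ∂μ, W ω ≤ M) (g : ℕ → ℝ) :
    p * ∫ ω, g (W ω + Y ω + 1) ∂μ - ∫ ω, Y ω * g (W ω + Y ω) ∂μ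
      = p ^ 2 * ∫ ω, (g (W ω + 2) - g (W ω + 1)) ∂μ := by
  have hsize : ∫ ω, Y ω * g (W ω + Y ω) ∂μ = p * ∫ ω, g (W ω + 1) ∂μ := by
    rw [← h.integral_natCast_mul_comp_of_indepFun hY hp hW hWY fun k => g (k + 1)]
    refine integral_congr_ae ?_
    filter_upwards [h.ae_le_one] with ω hω
    interval_cases Y ω <;> simp
  have hshift : ∫ ω, g (W ω + Y ω + 1) ∂μ - ∫ ω, g (W ω + 1) ∂μ
      = p * ∫ ω, (g (W ω + 2) - g (W ω + 1)) ∂μ := by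
    have hM' : ∀ᵐ ω ∂μ, W ω + Y ω ≤ M + 1 := by
      filter_upwards [hM, h.ae_le_one] with ω h₁ h₂
      omega
    rw [← integral_sub (integrable_comp_of_ae_le (by fun_prop) hM' fun k => g (k + 1))
      (integrable_comp_of_ae_le hW hM fun k => g (k + 1)),
      ← h.integral_natCast_mul_comp_of_indepFun hY hp hW hWY fun k => g (k + 2) - g (k + 1)]
    refine integral_congr_ae ?_
    filter_upwards [h.ae_le_one] with ω hω
    interval_cases Y ω <;> simp
  rw [hsize]
  linear_combination p * hshift

end HasLawBernoulli

variable {ι : Type*} [Fintype ι] {Y : ι → Ω → ℕ} {p : ι → ℝ}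

theorem integral_poissonSteinOperator_sum_eq [IsFiniteMeasure μ] [DecidableEq ι]
    (hY : ∀ i, Measurable (Y i)) (hindep : iIndepFun Y μ)
    (hlaw : ∀ i, HasLawBernoulli μ (Y i) (p i)) (hp : ∀ i, 0 ≤ p i) (g : ℕ → ℝ) :
    ∫ ω, poissonSteinOperator (∑ i, p i) g (∑ i, Y i ω) ∂μ
      = ∑ i, p i ^ 2 * ∫ ω, (g (∑ j ∈ Finset.univ.erase i, Y j ω + 2)
          - g (∑ j ∈ Finset.univ.erase i, Y j ω + 1)) ∂μ := by
  set W : ι → Ω → ℕ := fun i ω => ∑ j ∈ Finset.univ.erase i, Y j ω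
  have hZ : Measurable fun ω => ∑ i, Y i ω := by fun_prop
  have hW : ∀ i, Measurable (W i) := fun i => by fun_prop
  have hWY : ∀ i, IndepFun (W i) (Y i) μ := fun i => by
    simpa only [Finset.sum_fn] using
      hindep.indepFun_finsetSum_of_notMem hY (Finset.notMem_erase i Finset.univ)
  have hZW : ∀ i ω, ∑ j, Y j ω = W i ω + Y i ω := fun i ω =>
    (Finset.sum_erase_add _ _ (Finset.mem_univ i)).symm
  have hZ_le : ∀ᵐ ω ∂μ, ∑ i, Y i ω ≤ Fintype.card ι := by
    filter_upwards [ae_all_iff.2 fun i => (hlaw i).ae_le_one] with ω hω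
    simpa using Finset.sum_le_sum fun i (_ : i ∈ Finset.univ) => hω i
  have hW_le : ∀ i, ∀ᵐ ω ∂μ, W i ω ≤ Fintype.card ι := fun i => by
    filter_upwards [hZ_le] with ω hω
    linarith [hZW i ω]
  have hg₁ := integrable_comp_of_ae_le hZ hZ_le fun k => g (k + 1)
  have hYg : ∀ i, Integrable (fun ω => Y i ω * g (∑ j, Y j ω)) μ := fun i =>
    (integrable_comp_of_ae_le hZ hZ_le fun k => k * g k).mono (by fun_prop) <|
      ae_of_all _ fun ω => by
        simp only [norm_mul, Real.norm_natCast]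
        gcongr
        exact Finset.single_le_sum (f := (Y · ω)) (fun j _ => Nat.zero_le _) (Finset.mem_univ i)
  calc ∫ ω, poissonSteinOperator (∑ i, p i) g (∑ i, Y i ω) ∂μ
      = ∑ i, (p i * ∫ ω, g (∑ j, Y j ω + 1) ∂μ
          - ∫ ω, Y i ω * g (∑ j, Y j ω) ∂μ) := by
        simp only [poissonSteinOperator, Finset.sum_mul, Nat.cast_sum]
        rw [integral_sub (integrable_finsetSum _ fun i _ => hg₁.const_mul _)
            (integrable_finsetSum _ fun i _ => hYg i),
          integral_finsetSum _ fun i _ => hg₁.const_mul _,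
          integral_finsetSum _ fun i _ => hYg i, ← Finset.sum_sub_distrib]
        simp only [integral_const_mul]
    _ = ∑ i, p i ^ 2 * ∫ ω, (g (W i ω + 2) - g (W i ω + 1)) ∂μ := by
        refine Finset.sum_congr rfl fun i _ => ?_
        simp only [hZW i]
        exact (hlaw i).integral_stein_add_eq (hY i) (hp i) (hW i) (hWY i) (hW_le i) g

theorem abs_integral_poissonSteinOperator_sum_le [IsProbabilityMeasure μ]
    (hY : ∀ i, Measurable (Y i)) (hindep : iIndepFun Y μ)
    (hlaw : ∀ i, HasLawBernoulli μ (Y i) (p i)) (hp : ∀ i, 0 ≤ p i)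
    {g : ℕ → ℝ} {C : ℝ} (hg : ∀ k, 0 < k → |g (k + 1) - g k| ≤ C) :
    |∫ ω, poissonSteinOperator (∑ i, p i) g (∑ i, Y i ω) ∂μ| ≤ C * ∑ i, p i ^ 2 := by
  classical
  rw [integral_poissonSteinOperator_sum_eq hY hindep hlaw hp, Finset.mul_sum]
  refine (Finset.abs_sum_le_sum_abs _ _).trans (Finset.sum_le_sum fun i _ => ?_)
  rw [abs_mul, abs_of_nonneg (sq_nonneg _), mul_comm C]
  refine mul_le_mul_of_nonneg_left ?_ (sq_nonneg _)
  have hstep : ∀ ω, ‖g (∑ j ∈ Finset.univ.erase i, Y j ω + 2)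
      - g (∑ j ∈ Finset.univ.erase i, Y j ω + 1)‖ ≤ C := fun ω => hg _ (Nat.succ_pos _)
  simpa using norm_integral_le_of_norm_le_const (ae_of_all μ hstep)

end

theorem poisson_approx_bernoulli_matched_general
    {Ω : Type*} [MeasurableSpace Ω] (μ : Measure Ω) [IsProbabilityMeasure μ]
    (n : ℕ) (Y : Fin n → Ω → ℕ) (hmeas : ∀ i, Measurable (Y i))
    (hindep : ProbabilityTheory.iIndepFun Y μ)
    (p : Fin n → ℝ) (hp0 : ∀ i, 0 ≤ p i)
    (hlaw : ∀ i, HasLawBernoulli μ (Y i) (p i))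
    (lam : ℝ) (hlam : lam = ∑ i, p i) (hlam_pos : 0 < lam) :
    dTV (Measure.map (fun ω => ∑ i, Y i ω) μ) (poissonMeasure lam) ≤
      (∑ i, p i ^ 2) / max 1 lam := by
  set r : ℝ≥0 := ⟨lam, hlam_pos.le⟩
  have hr : 0 < r := hlam_pos
  have hZ : Measurable fun ω => ∑ i, Y i ω := by fun_prop
  refine ciSup_le fun A => ?_
  rw [← measureReal_def, ← measureReal_def, map_measureReal_apply hZ (by measurability),
    show poissonMeasure lam = Po(r) from rfl,
    measureReal_preimage_sub_poissonMeasure_eq_integral hr hZ A, div_eq_inv_mul]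
  have := abs_integral_poissonSteinOperator_sum_le hmeas hindep hlaw hp0
    fun k hk => abs_poissonSteinSolution_succ_sub_le hr A hk
  rwa [← hlam] at this

/-- Poisson approximation bound for sums of independent Bernoulli random
variables with the matched mean λ = ∑ pᵢ (the Barbour–Hall bound). -/
theorem poisson_approx_bernoulli_matched
    {Ω : Type*} [MeasurableSpace Ω] (μ : Measure Ω) [IsProbabilityMeasure μ]
    (n : ℕ) (Y : Fin n → Ω → ℕ) (hmeas : ∀ i, Measurable (Y i))
    (hindep : ProbabilityTheory.iIndepFun Y μ)
    (p : Fin n → ℝ) (hp0 : ∀ i, 0 ≤ p i) (hp1 : ∀ i, p i ≤ 1)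
    (hlaw : ∀ i, HasLawBernoulli μ (Y i) (p i))
    (lam : ℝ) (hlam : lam = ∑ i, p i) (hlam_pos : 0 < lam) :
    dTV (Measure.map (fun ω => ∑ i, Y i ω) μ) (poissonMeasure lam) ≤
      (∑ i, p i ^ 2) / max 1 lam :=
  poisson_approx_bernoulli_matched_general μ n Y hmeas hindep p hp0 hlaw lam hlam hlam_pos
end

section
/- Let $\mu>0$ and let $i\ge 1$ be an integer. Then $\sum_{j=1}^{\infty} j\,\frac{\mu^{\,ij+1}}{(ij)!} \;\le\; \mu^{\,i+1}\, e^{\mu^{\,i}}$. -/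
/-- For μ > 0 and an integer i ≥ 1: ∑_{j≥1} j μ^{ij+1}/(ij)! ≤ μ^{i+1} e^{μⁱ}
(the j = 0 summand vanishes, so the sum is taken over all j : ℕ). -/
theorem poisson_tail_series_bound (mu : ℝ) (hmu : 0 < mu) (i : ℕ) (hi : 1 ≤ i) :
    ∑' j : ℕ, (j : ℝ) * mu ^ (i * j + 1) / (Nat.factorial (i * j))
      ≤ mu ^ (i + 1) * Real.exp (mu ^ i) := by
  set f : ℕ → ℝ := fun j => (j : ℝ) * mu ^ (i * j + 1) / (Nat.factorial (i * j)) with hf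
  set g : ℕ → ℝ := fun j => mu ^ (i + 1) * (mu ^ i) ^ j / (Nat.factorial j) with hg
  have hgsum : Summable g := by
    have := (Real.summable_pow_div_factorial (mu ^ i)).mul_left (mu ^ (i + 1))
    refine this.congr fun n => ?_
    simp [hg, mul_div_assoc]
  have hkey : ∀ j : ℕ, f (j + 1) ≤ g j := by
    intro j
    have hfac : ((j + 1).factorial : ℝ) ≤ (Nat.factorial (i * (j + 1)) : ℝ) := by
      exact_mod_cast Nat.factorial_le (Nat.le_mul_of_pos_left _ hi)
    have hpow : mu ^ (i * (j + 1) + 1) = mu ^ (i + 1) * (mu ^ i) ^ j := by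
      rw [← pow_mul, ← pow_add]; ring_nf
    have hfacpos : (0 : ℝ) < (Nat.factorial (i * (j + 1)) : ℝ) := by
      exact_mod_cast Nat.factorial_pos _
    have hfacpos' : (0 : ℝ) < (Nat.factorial j : ℝ) := by
      exact_mod_cast Nat.factorial_pos _
    have hmp : (0 : ℝ) < mu ^ (i * (j + 1) + 1) := pow_pos hmu _
    show ((j + 1 : ℕ) : ℝ) * mu ^ (i * (j + 1) + 1) / (Nat.factorial (i * (j + 1)))
        ≤ mu ^ (i + 1) * (mu ^ i) ^ j / (Nat.factorial j)
    rw [← hpow, div_le_div_iff₀ hfacpos hfacpos']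
    calc ((j + 1 : ℕ) : ℝ) * mu ^ (i * (j + 1) + 1) * (Nat.factorial j)
        = mu ^ (i * (j + 1) + 1) * ((j + 1).factorial : ℝ) := by
          rw [Nat.factorial_succ]; push_cast; ring
      _ ≤ mu ^ (i * (j + 1) + 1) * (Nat.factorial (i * (j + 1)) : ℝ) := by
          exact mul_le_mul_of_nonneg_left hfac hmp.le
      _ = mu ^ (i * (j + 1) + 1) * (Nat.factorial (i * (j + 1))) := rfl
  have hfpos : ∀ j, 0 ≤ f j := fun j => by
    apply div_nonneg (mul_nonneg (Nat.cast_nonneg _) (pow_pos hmu _).le) (Nat.cast_nonneg _)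
  have hshift : Summable (fun j => f (j + 1)) :=
    Summable.of_nonneg_of_le (fun j => hfpos _) hkey hgsum
  have hfsum : Summable f := (summable_nat_add_iff 1).mp hshift
  have h0 : f 0 = 0 := by simp [hf]
  have hexp : mu ^ (i + 1) * Real.exp (mu ^ i) = ∑' j, g j := by
    rw [Real.exp_eq_exp_ℝ, NormedSpace.exp_eq_tsum_div, ← tsum_mul_left]
    simp [hg, mul_div_assoc]
  calc ∑' j, f j = f 0 + ∑' j, f (j + 1) := (Summable.tsum_eq_zero_add hfsum)
    _ = ∑' j, f (j + 1) := by rw [h0, zero_add]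
    _ ≤ ∑' j, g j := Summable.tsum_le_tsum hkey hshift hgsum
    _ = mu ^ (i + 1) * Real.exp (mu ^ i) := hexp.symm
end
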